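/- Let (g,·) be a pre-Lie algebra over a field K of characteristic 0 with a representation (V;ρ,μ), and let T₁, T₂: V → g be compatible O-operators (every K-linear combination k₁T₁ + k₂T₂ is an O-operator) with T₂ bijective. Set N = T₁∘T₂⁻¹ and S = T₂⁻¹∘T₁. Then for i = 1,2: S is a Nijenhuis operator on the pre-Lie algebra (V, ·^{T_i}) with u ·^{T_i} v = ρ(T_i(u))v + μ(T_i(v))u, N is a Nijenhuis operator on (g,·), and N∘T_i∘S = N²∘T_i, i.e. (S,N) is a Nijenhuis pair on the pre-Lie-morphism triple ((V,·^{T_i}),(g,·),T_i). Moreover T_i(u ·^{T_i}_S v) = T_i(u) ·_N T_i(v) for all u,v ∈ V, where u ·^{T_i}_S v = S(u)·^{T_i}v + u·^{T_i}S(v) − S(u·^{T_i}v) and x ·_N y = N(x)·y + x·N(y) − N(x·y); that is, T_i is a pre-Lie algebra homomorphism from (V, ·^{T_i}_S) to (g, ·_N). -/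
import Mathlib


/-- The product `u ·^T v := ρ(T u) v + μ(T v) u` on `V` associated to a linear map
`T : V → g` and a pair of linear maps `ρ, μ : g → End(V)`. -/
def oProd {K g V : Type*} [Field K] [AddCommGroup g] [Module K g]
    [AddCommGroup V] [Module K V]
    (ρ μ : g →ₗ[K] Module.End K V) (T : V →ₗ[K] g) (u v : V) : V :=
  ρ (T u) v + μ (T v) u

/-- The deformed product `x ·_N y := N(x)·y + x·N(y) − N(x·y)`. -/
def nijProd {K g : Type*} [Field K] [AddCommGroup g] [Module K g]
    (mul : g →ₗ[K] g →ₗ[K] g) (N : g →ₗ[K] g) (x y : g) : g :=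
  mul (N x) y + mul x (N y) - N (mul x y)

/-- If `T₁, T₂` are compatible O-operators on a pre-Lie algebra `(g,·)`
associated to `(V;ρ,μ)` with `T₂` bijective, `N = T₁∘T₂⁻¹` (i.e. `N∘T₂ = T₁`) and
`S = T₂⁻¹∘T₁` (i.e. `T₂∘S = T₁`), then for `i = 1, 2` the pair `(S, N)` is a Nijenhuis
pair on the pre-Lie-morphism triple `((V, ·^{T_i}), (g, ·), T_i)`, and `T_i` is a pre-Lie
algebra homomorphism from `(V, ·^{T_i}_S)` to `(g, ·_N)`. -/
theorem compatible_oOperators_give_nijenhuis_pair {K : Type*} [Field K] [CharZero K]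
    {g V : Type*} [AddCommGroup g] [Module K g] [AddCommGroup V] [Module K V]
    (mul : g →ₗ[K] g →ₗ[K] g)
    (hpre : ∀ x y z : g,
      mul (mul x y) z - mul x (mul y z) = mul (mul y x) z - mul y (mul x z))
    (ρ μ : g →ₗ[K] Module.End K V)
    (hrep₁ : ∀ x y : g, ρ (mul x y - mul y x) = ρ x * ρ y - ρ y * ρ x)
    (hrep₂ : ∀ x y : g, ρ x * μ y - μ y * ρ x = μ (mul x y) - μ y * μ x)
    (T₁ T₂ : V →ₗ[K] g)
    (hT₁ : ∀ u v : V, mul (T₁ u) (T₁ v) = T₁ (oProd ρ μ T₁ u v))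
    (hT₂ : ∀ u v : V, mul (T₂ u) (T₂ v) = T₂ (oProd ρ μ T₂ u v))
    (hcompat : ∀ k₁ k₂ : K, ∀ u v : V,
      mul ((k₁ • T₁ + k₂ • T₂) u) ((k₁ • T₁ + k₂ • T₂) v)
        = (k₁ • T₁ + k₂ • T₂) (oProd ρ μ (k₁ • T₁ + k₂ • T₂) u v))
    (hbij : Function.Bijective T₂)
    (N : g →ₗ[K] g) (hN : ∀ u : V, N (T₂ u) = T₁ u)
    (S : V →ₗ[K] V) (hS : ∀ u : V, T₂ (S u) = T₁ u) :
    (∀ u v : V,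
      oProd ρ μ T₁ (S u) (S v)
        = S (oProd ρ μ T₁ (S u) v + oProd ρ μ T₁ u (S v) - S (oProd ρ μ T₁ u v))) ∧
    (∀ u v : V,
      oProd ρ μ T₂ (S u) (S v)
        = S (oProd ρ μ T₂ (S u) v + oProd ρ μ T₂ u (S v) - S (oProd ρ μ T₂ u v))) ∧
    (∀ x y : g, mul (N x) (N y) = N (nijProd mul N x y)) ∧
    (∀ u : V, N (T₁ (S u)) = N (N (T₁ u))) ∧
    (∀ u : V, N (T₂ (S u)) = N (N (T₂ u))) ∧
    (∀ u v : V,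
      T₁ (oProd ρ μ T₁ (S u) v + oProd ρ μ T₁ u (S v) - S (oProd ρ μ T₁ u v))
        = nijProd mul N (T₁ u) (T₁ v)) ∧
    (∀ u v : V,
      T₂ (oProd ρ μ T₂ (S u) v + oProd ρ μ T₂ u (S v) - S (oProd ρ μ T₂ u v))
        = nijProd mul N (T₂ u) (T₂ v)) := by
  obtain ⟨hinj, hsurj⟩ := hbij
  have hTS : ∀ w, T₁ (S w) = N (T₁ w) := fun w => by rw [← hS w, hN]
  have hNT2 : ∀ w, N (T₂ w) = T₂ (S w) := fun w => by rw [hN, hS]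
  -- mixed identity from compatibility
  have hM : ∀ u v : V, T₂ (oProd ρ μ T₁ u v)
      = mul (T₁ u) (T₂ v) + mul (T₂ u) (T₁ v) - T₁ (oProd ρ μ T₂ u v) := by
    intro u v
    have h := hcompat 1 1 u v
    have h1 := hT₁ u v
    have h2 := hT₂ u v
    simp only [one_smul, LinearMap.add_apply, oProd, map_add] at h h1 h2 ⊢
    linear_combination (norm := module) h1 + h2 - h
  -- N is a Nijenhuis operator
  have hNij : ∀ x y : g, mul (N x) (N y) = N (nijProd mul N x y) := by
    intro x y
    obtain ⟨u, rfl⟩ := hsurj x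
    obtain ⟨v, rfl⟩ := hsurj y
    have : nijProd mul N (T₂ u) (T₂ v) = T₂ (oProd ρ μ T₁ u v) := by
      rw [nijProd, hN u, hN v, hT₂, hN, hM]
    rw [this, hN u, hN v, hN]
    exact hT₁ u v
  -- homomorphism statement for T₁
  have hG6 : ∀ u v : V,
      T₁ (oProd ρ μ T₁ (S u) v + oProd ρ μ T₁ u (S v) - S (oProd ρ μ T₁ u v))
        = nijProd mul N (T₁ u) (T₁ v) := by
    intro u v
    rw [map_sub, map_add, ← hT₁, ← hT₁, hTS, hTS, hTS, ← hT₁, nijProd]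
  -- homomorphism statement for T₂
  have hG7 : ∀ u v : V,
      T₂ (oProd ρ μ T₂ (S u) v + oProd ρ μ T₂ u (S v) - S (oProd ρ μ T₂ u v))
        = nijProd mul N (T₂ u) (T₂ v) := by
    intro u v
    rw [map_sub, map_add, ← hT₂, ← hT₂, ← hNT2, ← hNT2, ← hNT2, ← hT₂, nijProd]
  refine ⟨?_, ?_, hNij, ?_, ?_, hG6, hG7⟩
  · intro u v
    apply hinj
    rw [hS, hG6]
    have expand : T₂ (oProd ρ μ T₁ (S u) (S v))
        = mul (T₁ (S u)) (T₂ (S v)) + mul (T₂ (S u)) (T₁ (S v))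
          - T₁ (oProd ρ μ T₂ (S u) (S v)) := hM (S u) (S v)
    rw [expand, ← hN (oProd ρ μ T₂ (S u) (S v)), ← hT₂ (S u) (S v),
      hTS u, hTS v, hS u, hS v, nijProd]
  · intro u v
    apply hinj
    conv_rhs => rw [hS, ← hN, hG7]
    rw [← hT₂, ← hNT2, ← hNT2, hNij]
  · intro u; rw [hTS]
  · intro u; rw [hS, hN]
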